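/- arXiv:1203.2415 — 2 statements merged into one kernel-verified Lean document; each statement's English description precedes it below -/
import Mathlib

section
/- Discrete variation identity for the Crank–Nicolson scheme: suppose (I + Lₙ) U_{n+1} = (I − Lₙ) Uₙ and (I + Lₙ) δU_{n+1} + δLₙ U_{n+1} = (I − Lₙ) δUₙ − δLₙ Uₙ for n = 0,…,N_T−1, with δU₀ = 0. Then U_{N_T}ᴴ δU_{N_T} = − Σ_{n=0}^{N_T−1} ((U_{n+1}+Uₙ)/2)ᴴ (2 δLₙ) ((U_{n+1}+Uₙ)/2), provided each Uₙ is unitary and each Lₙ is skew-Hermitian. -/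
open Matrix

lemma cn_step {N : ℕ} (U U' dU dU' L dL : Matrix (Fin N) (Fin N) ℂ)
    (hskew : Lᴴ = -L) (hA : IsUnit (1 + L))
    (hrec : (1 + L) * U' = (1 - L) * U)
    (hvar : (1 + L) * dU' + dL * U' = (1 - L) * dU - dL * U) :
    U'ᴴ * dU' = Uᴴ * dU -
      ((1 / 2 : ℂ) • (U' + U))ᴴ * ((2 : ℂ) • dL) * ((1 / 2 : ℂ) • (U' + U)) := by
  set A : Matrix (Fin N) (Fin N) ℂ := 1 + L with hAdef
  set B : Matrix (Fin N) (Fin N) ℂ := 1 - L with hBdef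
  have hAB : Aᴴ = B := by
    simp [hAdef, hBdef, conjTranspose_add, hskew, sub_eq_add_neg]
  have hBA : Bᴴ = A := by rw [← hAB, conjTranspose_conjTranspose]
  obtain ⟨iA⟩ := hA.nonempty_invertible
  have hstarA : star A = B := by rw [Matrix.star_eq_conjTranspose, hAB]
  have hBu : IsUnit B := hstarA ▸ hA.star
  obtain ⟨iB⟩ := hBu.nonempty_invertible
  have hcomm : A * B = B * A := by
    simp only [hAdef, hBdef, mul_sub, sub_mul, mul_add, add_mul, mul_one, one_mul]
    abel
  have hC : Commute A B := hcomm
  have hCiAB : ⅟A * ⅟B = ⅟B * ⅟A := (hC.invOf_left.invOf_right).symm.eq.symm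
  have hU' : U' = ⅟A * (B * U) := by
    rw [← hrec, ← mul_assoc, invOf_mul_self, one_mul]
  have hdU' : dU' = ⅟A * (B * dU - dL * (U + U')) := by
    have h : A * dU' = B * dU - dL * (U + U') := by
      rw [mul_add] at *
      linear_combination (norm := noncomm_ring) hvar
    rw [← h, ← mul_assoc, invOf_mul_self, one_mul]
  have hsum : U' + U = ⅟A * ((2 : ℂ) • U) := by
    have h2 : (2 : ℂ) • U = B * U + A * U := by
      have hba : B + A = (2 : ℂ) • (1 : Matrix (Fin N) (Fin N) ℂ) := by
        simp [hAdef, hBdef]; module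
      rw [← add_mul, hba, smul_mul_assoc, one_mul]
    rw [h2, mul_add, ← hU', ← mul_assoc, invOf_mul_self, one_mul]
  have hiAct : (⅟A)ᴴ = ⅟B :=
    (invOf_eq_right_inv (by
      rw [← hAB, ← conjTranspose_mul, invOf_mul_self, conjTranspose_one])).symm
  have hU'ct : U'ᴴ = Uᴴ * A * ⅟B := by
    rw [hU', conjTranspose_mul, conjTranspose_mul, hBA, hiAct, mul_assoc]
  have hsumct : (U' + U)ᴴ = ((2 : ℂ) • Uᴴ) * ⅟B := by
    rw [hsum, conjTranspose_mul, hiAct, conjTranspose_smul]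
    simp
  have h1 : Uᴴ * A * ⅟B * (⅟A * (B * dU)) = Uᴴ * dU := by
    have e1 : Uᴴ * A * ⅟B * (⅟A * (B * dU)) = Uᴴ * A * (⅟B * ⅟A) * B * dU := by
      noncomm_ring
    rw [e1, ← hCiAB]
    have e2 : Uᴴ * A * (⅟A * ⅟B) * B * dU = Uᴴ * (A * ⅟A) * (⅟B * B) * dU := by
      noncomm_ring
    rw [e2, mul_invOf_self, invOf_mul_self, mul_one, mul_one]
  have h2 : Uᴴ * A * ⅟B * (⅟A * (dL * (U + U'))) = Uᴴ * ⅟B * (dL * (U + U')) := by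
    have e1 : Uᴴ * A * ⅟B * (⅟A * (dL * (U + U'))) = Uᴴ * A * (⅟B * ⅟A) * (dL * (U + U')) := by
      noncomm_ring
    rw [e1, ← hCiAB]
    have e2 : Uᴴ * A * (⅟A * ⅟B) * (dL * (U + U')) = Uᴴ * (A * ⅟A) * (⅟B * (dL * (U + U'))) := by
      noncomm_ring
    rw [e2, mul_invOf_self, mul_one, ← mul_assoc]
  have lhs : U'ᴴ * dU' = Uᴴ * dU - Uᴴ * ⅟B * (dL * (U + U')) := by
    rw [hU'ct, hdU', mul_sub, mul_sub, h1, h2]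
  rw [lhs]
  congr 1
  rw [conjTranspose_smul, hsumct]
  simp only [Matrix.smul_mul, Matrix.mul_smul]
  rw [smul_smul, smul_smul, smul_smul]
  norm_num
  rw [add_comm U' U]
  noncomm_ring
open Finset

/-- Discrete variation identity for the Crank–Nicolson scheme. -/
theorem crank_nicolson_variation_identity {N NT : ℕ}
    (U δU L δL : ℕ → Matrix (Fin N) (Fin N) ℂ)
    (hLskew : ∀ n, (L n)ᴴ = -(L n))
    (hUunit : ∀ n ≤ NT, (U n)ᴴ * U n = 1 ∧ U n * (U n)ᴴ = 1)
    (hLinv : ∀ n, IsUnit (1 + L n))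
    (hrec : ∀ n < NT, (1 + L n) * U (n + 1) = (1 - L n) * U n)
    (hvar : ∀ n < NT,
      (1 + L n) * δU (n + 1) + δL n * U (n + 1) = (1 - L n) * δU n - δL n * U n)
    (hinit : δU 0 = 0) :
    (U NT)ᴴ * δU NT =
      -∑ n ∈ Finset.range NT,
        ((1 / 2 : ℂ) • (U (n + 1) + U n))ᴴ * ((2 : ℂ) • δL n) *
          ((1 / 2 : ℂ) • (U (n + 1) + U n)) := by
  clear hUunit
  induction NT with
  | zero => simp [hinit]
  | succ m ih =>
    have ih' := ih (fun n hn => hrec n (Nat.lt_succ_of_lt hn))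
      (fun n hn => hvar n (Nat.lt_succ_of_lt hn))
    rw [Finset.sum_range_succ, neg_add, ← ih']
    have := cn_step (U m) (U (m + 1)) (δU m) (δU (m + 1)) (L m) (δL m)
      (hLskew m) (hLinv m) (hrec m (Nat.lt_succ_self m)) (hvar m (Nat.lt_succ_self m))
    rw [this]
    abel
end

section
/- One-step variation identity: if Uₙ, U_{n+1} are unitary, Lₙ is skew-Hermitian with I + Lₙ invertible, (I+Lₙ)U_{n+1} = (I−Lₙ)Uₙ, and (I+Lₙ)δU_{n+1} + δLₙ U_{n+1} = (I−Lₙ)δUₙ − δLₙ Uₙ, then ((U_{n+1}+Uₙ)ᴴ) δLₙ (U_{n+1}+Uₙ) = −2 (U_{n+1}ᴴ δU_{n+1} − Uₙᴴ δUₙ). -/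
open Matrix

/-- One-step variation identity for the Crank–Nicolson scheme. -/
theorem crank_nicolson_one_step_variation {N : ℕ}
    (Un Un1 δUn δUn1 L δL : Matrix (Fin N) (Fin N) ℂ)
    (hUn : Unᴴ * Un = 1 ∧ Un * Unᴴ = 1)
    (hUn1 : Un1ᴴ * Un1 = 1 ∧ Un1 * Un1ᴴ = 1)
    (hL : Lᴴ = -L)
    (hLinv : IsUnit (1 + L))
    (hrec : (1 + L) * Un1 = (1 - L) * Un)
    (hvar : (1 + L) * δUn1 + δL * Un1 = (1 - L) * δUn - δL * Un) :
    (Un1 + Un)ᴴ * δL * (Un1 + Un) = -((2 : ℂ) • (Un1ᴴ * δUn1 - Unᴴ * δUn)) := by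
  have hL1 : (1 + L)ᴴ = 1 - L := by
    rw [conjTranspose_add, conjTranspose_one, hL, sub_eq_add_neg]
  have hL2 : (1 - L)ᴴ = 1 + L := by
    rw [conjTranspose_sub, conjTranspose_one, hL, sub_neg_eq_add]
  have h1 : Un1ᴴ * (1 - L) = Unᴴ * (1 + L) := by
    have := congrArg conjTranspose hrec
    simpa [conjTranspose_mul, hL1, hL2] using this
  have e1 : (1 + L) * δUn1 + δL * Un1 + δL * Un = (1 - L) * δUn := by
    rw [hvar]; abel
  have h2 : δL * (Un1 + Un) = (1 - L) * δUn - (1 + L) * δUn1 := by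
    rw [mul_add, eq_sub_iff_add_eq, ← e1]; abel
  have hA : Un1ᴴ * (1 - L) * δUn = Unᴴ * (1 + L) * δUn := by rw [h1]
  have hB : Unᴴ * (1 + L) * δUn1 = Un1ᴴ * (1 - L) * δUn1 := by rw [h1]
  rw [mul_assoc, h2, conjTranspose_add]
  calc (Un1ᴴ + Unᴴ) * ((1 - L) * δUn - (1 + L) * δUn1)
      = Un1ᴴ * (1 - L) * δUn + Unᴴ * (1 - L) * δUn
        - (Un1ᴴ * (1 + L) * δUn1 + Unᴴ * (1 + L) * δUn1) := by noncomm_ring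
    _ = Unᴴ * (1 + L) * δUn + Unᴴ * (1 - L) * δUn
        - (Un1ᴴ * (1 + L) * δUn1 + Un1ᴴ * (1 - L) * δUn1) := by rw [hA, hB]
    _ = -((2 : ℂ) • (Un1ᴴ * δUn1 - Unᴴ * δUn)) := by
        rw [smul_sub, two_smul, two_smul]; noncomm_ring
end
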